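/- Let N be a positive integer, S ⊆ Fin N a nonempty set with i_* ∈ S and |S| = M ≥ 2, M < N. In ℂ^N with standard basis {e_i}, define |i_*⟩ = e_{i_*}, |S⁻⟩ = (1/√(M−1)) Σ_{i ∈ S \ {i_*}} e_i, |S⊥⟩ = (1/√(N−M)) Σ_{i ∉ S} e_i, and |N⟩ = (1/√N) Σ_i e_i. Let O_S be the diagonal operator with O_S e_i = (−1)^{[i ∈ S]} e_i, O_* the diagonal operator with O_* e_i = (−1)^{[i = i_*]} e_i, and G = I − 2|N⟩⟨N|. Then the three-dimensional subspace V = span{|i_*⟩, |S⁻⟩, |S⊥⟩} contains |N⟩ and is invariant under O_S, O_*, and G. -/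

import Mathlib

open scoped BigOperators

/-!
The three spanning vectors are the normalised indicator vectors of {i_*}, S \ {i_*} and Sᶜ. The
operators O_S and O_* are diagonal with eigenvalue constant on each of these three blocks, so each
spanning vector is an eigenvector of both. Since |N⟩ is proportional to the sum of the three
unnormalised indicator vectors, it lies in V, and G v = v - 2⟨N|v⟩|N⟩ then stays in V.
-/

section

variable {ι R E : Type*} [CommSemiring R] [AddCommGroup E]

open Finset in
theorem Finset.sum_mem_of_inv_sqrt_card_smul_sum_mem [Module ℂ E] {V : Submodule ℂ E}
    (s : Finset ι) (e : ι → E) (h : ((1 / Real.sqrt (#s : ℝ) : ℝ) : ℂ) • ∑ i ∈ s, e i ∈ V) :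
    ∑ i ∈ s, e i ∈ V := by
  rcases s.eq_empty_or_nonempty with rfl | hs
  · simp
  have hcard : (0 : ℝ) < Real.sqrt #s := Real.sqrt_pos.2 (by exact_mod_cast hs.card_pos)
  convert V.smul_mem (Real.sqrt #s : ℂ) h using 1
  rw [smul_smul, ← Complex.ofReal_mul, mul_one_div_cancel hcard.ne', Complex.ofReal_one, one_smul]

theorem LinearMap.map_smul_sum_of_forall_map_eq_smul [Module R E] (T : E →ₗ[R] E)
    {s : Finset ι} {e : ι → E} {c : R} (h : ∀ i ∈ s, T (e i) = c • e i) (a : R) :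
    T (a • ∑ i ∈ s, e i) = c • a • ∑ i ∈ s, e i := by
  rw [map_smul, map_sum, Finset.sum_congr rfl h, ← Finset.smul_sum, smul_comm]

theorem Submodule.span_le_comap_of_forall_map_eq_smul [Module R E] (T : E →ₗ[R] E) {s : Set E}
    (h : ∀ x ∈ s, ∃ c : R, T x = c • x) : span R s ≤ (span R s).comap T :=
  span_le.2 fun x hx ↦ by
    obtain ⟨c, hc⟩ := h x hx
    simpa [hc] using (span R s).smul_mem c (subset_span hx)

end

open Finset in
theorem stmt_14_general (N M : ℕ)
    (S : Finset (Fin N)) (istar : Fin N) (hi : istar ∈ S)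
    (hcard : S.card = M)
    (e : Fin N → EuclideanSpace ℂ (Fin N))
    (ketStar ketSm ketSp ketN : EuclideanSpace ℂ (Fin N))
    (hks : ketStar = e istar)
    (hsm : ketSm = ((1 / Real.sqrt ((M : ℝ) - 1) : ℝ) : ℂ) • ∑ i ∈ S.erase istar, e i)
    (hsp : ketSp = ((1 / Real.sqrt ((N : ℝ) - (M : ℝ)) : ℝ) : ℂ) • ∑ i ∈ Sᶜ, e i)
    (hkN : ketN = ((1 / Real.sqrt (N : ℝ) : ℝ) : ℂ) • ∑ i, e i)
    (OS Ostar : EuclideanSpace ℂ (Fin N) →ₗ[ℂ] EuclideanSpace ℂ (Fin N))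
    (hOS : ∀ i, OS (e i) = (if i ∈ S then (-1 : ℂ) else 1) • e i)
    (hOstar : ∀ i, Ostar (e i) = (if i = istar then (-1 : ℂ) else 1) • e i)
    (G : EuclideanSpace ℂ (Fin N) → EuclideanSpace ℂ (Fin N))
    (hG : ∀ v, G v = v - (2 : ℂ) • (inner ℂ ketN v : ℂ) • ketN) :
    ketN ∈ Submodule.span ℂ {ketStar, ketSm, ketSp} ∧
    ∀ v ∈ Submodule.span ℂ {ketStar, ketSm, ketSp},
      OS v ∈ Submodule.span ℂ {ketStar, ketSm, ketSp} ∧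
      Ostar v ∈ Submodule.span ℂ {ketStar, ketSm, ketSp} ∧
      G v ∈ Submodule.span ℂ {ketStar, ketSm, ketSp} := by
  set V := Submodule.span ℂ ({ketStar, ketSm, ketSp} : Set (EuclideanSpace ℂ (Fin N)))
  have hM : (M : ℝ) - 1 = #(S.erase istar) := by
    rw [card_erase_of_mem hi, hcard, Nat.cast_pred (hcard ▸ card_pos.2 ⟨istar, hi⟩)]
  have hNM : (N : ℝ) - M = #Sᶜ := by
    have hS : #S ≤ N := by simpa using card_le_univ S
    rw [card_compl, Fintype.card_fin, ← hcard, Nat.cast_sub hS]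
  have hsumE : ∑ i ∈ S.erase istar, e i ∈ V :=
    (S.erase istar).sum_mem_of_inv_sqrt_card_smul_sum_mem e
      (by rw [← hM, ← hsm]; exact Submodule.subset_span (by simp))
  have hsumC : ∑ i ∈ Sᶜ, e i ∈ V :=
    Sᶜ.sum_mem_of_inv_sqrt_card_smul_sum_mem e
      (by rw [← hNM, ← hsp]; exact Submodule.subset_span (by simp))
  have hNV : ketN ∈ V := by
    rw [hkN, ← sum_add_sum_compl S, ← sum_erase_add S _ hi, ← hks]
    exact V.smul_mem _ (V.add_mem (V.add_mem hsumE (Submodule.subset_span (by simp))) hsumC)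
  have hOSV : V ≤ V.comap OS := by
    refine Submodule.span_le_comap_of_forall_map_eq_smul OS ?_
    rintro x (rfl | rfl | rfl)
    · exact ⟨-1, by rw [hks, hOS, if_pos hi]⟩
    · refine ⟨-1, hsm ▸ OS.map_smul_sum_of_forall_map_eq_smul (fun i hi' ↦ ?_) _⟩
      rw [hOS, if_pos (mem_of_mem_erase hi')]
    · refine ⟨1, hsp ▸ OS.map_smul_sum_of_forall_map_eq_smul (fun i hi' ↦ ?_) _⟩
      rw [hOS, if_neg (mem_compl.1 hi')]
  have hOstarV : V ≤ V.comap Ostar := by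
    refine Submodule.span_le_comap_of_forall_map_eq_smul Ostar ?_
    rintro x (rfl | rfl | rfl)
    · exact ⟨-1, by rw [hks, hOstar, if_pos rfl]⟩
    · refine ⟨1, hsm ▸ Ostar.map_smul_sum_of_forall_map_eq_smul (fun i hi' ↦ ?_) _⟩
      rw [hOstar, if_neg (ne_of_mem_erase hi')]
    · refine ⟨1, hsp ▸ Ostar.map_smul_sum_of_forall_map_eq_smul (fun i hi' ↦ ?_) _⟩
      rw [hOstar, if_neg (ne_of_mem_of_not_mem hi (mem_compl.1 hi')).symm]
  refine ⟨hNV, fun v hv ↦ ⟨hOSV hv, hOstarV hv, ?_⟩⟩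
  rw [hG]
  exact V.sub_mem hv (V.smul_mem _ (V.smul_mem _ hNV))

theorem stmt_14 (N M : ℕ) (hN : 0 < N)
    (S : Finset (Fin N)) (istar : Fin N) (hi : istar ∈ S)
    (hcard : S.card = M) (hM2 : 2 ≤ M) (hMN : M < N)
    (e : Fin N → EuclideanSpace ℂ (Fin N))
    (he : ∀ i, e i = EuclideanSpace.single i 1)
    (ketStar ketSm ketSp ketN : EuclideanSpace ℂ (Fin N))
    (hks : ketStar = e istar)
    (hsm : ketSm = ((1 / Real.sqrt ((M : ℝ) - 1) : ℝ) : ℂ) • ∑ i ∈ S.erase istar, e i)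
    (hsp : ketSp = ((1 / Real.sqrt ((N : ℝ) - (M : ℝ)) : ℝ) : ℂ) • ∑ i ∈ Sᶜ, e i)
    (hkN : ketN = ((1 / Real.sqrt (N : ℝ) : ℝ) : ℂ) • ∑ i, e i)
    (OS Ostar : EuclideanSpace ℂ (Fin N) →ₗ[ℂ] EuclideanSpace ℂ (Fin N))
    (hOS : ∀ i, OS (e i) = (if i ∈ S then (-1 : ℂ) else 1) • e i)
    (hOstar : ∀ i, Ostar (e i) = (if i = istar then (-1 : ℂ) else 1) • e i)
    (G : EuclideanSpace ℂ (Fin N) → EuclideanSpace ℂ (Fin N))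
    (hG : ∀ v, G v = v - (2 : ℂ) • (inner ℂ ketN v : ℂ) • ketN) :
    ketN ∈ Submodule.span ℂ {ketStar, ketSm, ketSp} ∧
    ∀ v ∈ Submodule.span ℂ {ketStar, ketSm, ketSp},
      OS v ∈ Submodule.span ℂ {ketStar, ketSm, ketSp} ∧
      Ostar v ∈ Submodule.span ℂ {ketStar, ketSm, ketSp} ∧
      G v ∈ Submodule.span ℂ {ketStar, ketSm, ketSp} :=
  stmt_14_general N M S istar hi hcard e ketStar ketSm ketSp ketN hks hsm hsp hkN OS Ostar hOS
    hOstar G hG
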